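/- arXiv:1504.02775 — 5 statements merged into one kernel-verified Lean document; each statement's English description precedes it below -/
import Mathlib

section
/- Let s and γ be real numbers with 2 < s < 5/2 and (s−1)²/(s+1) < γ < s−1. Then there exists a constant C > 0 such that for all τ ∈ ℝ and all ξ ∈ ℝ²: |τ|^{s+1}·‖ξ‖² ≤ C·(1 + ‖ξ‖^{2(s+1)} + |τ|⁴ + |τ|⁴·‖ξ‖^{2γ}). -/
open Real

lemma stmt_0_aux (s γ : ℝ) (hs₁ : 2 < s) (hs₂ : s < 5 / 2)
    (hγ₁ : (s - 1) ^ 2 / (s + 1) < γ) (hγ₂ : γ < s - 1) (a r : ℝ)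
    (ha : 0 ≤ a) (hr : 0 ≤ r) :
    a ^ (s + 1) * r ^ (2 : ℝ) ≤
      1 + r ^ (2 * (s + 1)) + a ^ (4 : ℝ) + a ^ (4 : ℝ) * r ^ (2 * γ) := by
  have hs0 : (0 : ℝ) < s + 1 := by linarith
  have hγ0 : 0 < γ := lt_of_le_of_lt (by positivity) hγ₁
  have hR : (0:ℝ) ≤ 1 + r ^ (2 * (s + 1)) + a ^ (4 : ℝ) + a ^ (4 : ℝ) * r ^ (2 * γ) := by
    positivity
  rcases eq_or_lt_of_le ha with ha0 | ha0
  · rw [← ha0, Real.zero_rpow hs0.ne', zero_mul]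
    positivity
  rcases eq_or_lt_of_le hr with hr0 | hr0
  · rw [← hr0, Real.zero_rpow (by norm_num : (2:ℝ) ≠ 0), mul_zero]
    positivity
  have hγs : (s - 1) ^ 2 < γ * (s + 1) := by
    rw [div_lt_iff₀ hs0] at hγ₁; linarith
  rcases le_or_gt (γ * (s + 1)) 4 with hc | hc
  · -- weights for 1, a^4 r^{2γ}, r^{2(s+1)}
    set w₂ : ℝ := (s + 1) / 4 with hw₂def
    set w₃ : ℝ := 1 / (s + 1) - γ / 4 with hw₃def
    set w₁ : ℝ := 1 - w₂ - w₃ with hw₁def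
    have hw₂ : 0 ≤ w₂ := by positivity
    have hw₃ : 0 ≤ w₃ := by
      have : w₃ = (4 - γ * (s + 1)) / (4 * (s + 1)) := by
        rw [hw₃def]; field_simp
      rw [this]
      apply div_nonneg (by linarith) (by linarith)
    have hw₁ : 0 ≤ w₁ := by
      have : w₁ = (γ * (s + 1) - (s - 1) ^ 2) / (4 * (s + 1)) := by
        rw [hw₁def, hw₂def, hw₃def]; field_simp; ring
      rw [this]
      apply div_nonneg (by linarith) (by linarith)
    have hwsum : w₁ + w₂ + w₃ = 1 := by rw [hw₁def]; ring
    have hp₂ : (0:ℝ) ≤ a ^ (4:ℝ) * r ^ (2 * γ) := by positivity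
    have hp₃ : (0:ℝ) ≤ r ^ (2 * (s + 1)) := by positivity
    have key : a ^ (s + 1) * r ^ (2 : ℝ) =
        (1:ℝ) ^ w₁ * (a ^ (4:ℝ) * r ^ (2 * γ)) ^ w₂ * (r ^ (2 * (s + 1))) ^ w₃ := by
      rw [one_rpow, one_mul, Real.mul_rpow (by positivity) (by positivity),
        ← Real.rpow_mul ha, ← Real.rpow_mul hr, ← Real.rpow_mul hr, mul_assoc,
        ← Real.rpow_add hr0]
      have e1 : (4:ℝ) * w₂ = s + 1 := by rw [hw₂def]; ring
      have e2 : 2 * γ * w₂ + 2 * (s + 1) * w₃ = 2 := by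
        rw [hw₂def, hw₃def]; field_simp; ring
      rw [e1, e2]
    rw [key]
    calc (1:ℝ) ^ w₁ * (a ^ (4:ℝ) * r ^ (2 * γ)) ^ w₂ * (r ^ (2 * (s + 1))) ^ w₃
        ≤ w₁ * 1 + w₂ * (a ^ (4:ℝ) * r ^ (2 * γ)) + w₃ * (r ^ (2 * (s + 1))) :=
          Real.geom_mean_le_arith_mean3_weighted hw₁ hw₂ hw₃ zero_le_one hp₂ hp₃ hwsum
      _ ≤ 1 + r ^ (2 * (s + 1)) + a ^ (4:ℝ) + a ^ (4:ℝ) * r ^ (2 * γ) := by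
          have h1 : w₁ ≤ 1 := by linarith
          have h2 : w₂ ≤ 1 := by linarith
          have h3 : w₃ ≤ 1 := by linarith
          have ha4 : (0:ℝ) ≤ a ^ (4:ℝ) := by positivity
          nlinarith [mul_le_of_le_one_left hp₂ h2, mul_le_of_le_one_left hp₃ h3]
  · -- weights for 1, a^4, a^4 r^{2γ}
    have hγne : γ ≠ 0 := hγ0.ne'
    obtain ⟨w₂, hw₂def⟩ : ∃ w : ℝ, w = (s + 1) / 4 - 1 / γ := ⟨_, rfl⟩
    obtain ⟨w₃, hw₃def⟩ : ∃ w : ℝ, w = 1 / γ := ⟨_, rfl⟩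
    set w₁ : ℝ := 1 - w₂ - w₃ with hw₁def
    have hw₂ : 0 ≤ w₂ := by
      have : w₂ = (γ * (s + 1) - 4) / (4 * γ) := by
        rw [hw₂def]; field_simp
      rw [this]
      apply div_nonneg (by linarith) (by linarith)
    have hw₃ : 0 ≤ w₃ := by rw [hw₃def]; positivity
    have hw₁ : 0 ≤ w₁ := by
      have : w₁ = (3 - s) / 4 := by rw [hw₁def, hw₂def, hw₃def]; ring
      rw [this]
      apply div_nonneg (by linarith) (by norm_num)
    have hwsum : w₁ + w₂ + w₃ = 1 := by rw [hw₁def]; ring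
    have hp₂ : (0:ℝ) ≤ a ^ (4:ℝ) := by positivity
    have hp₃ : (0:ℝ) ≤ a ^ (4:ℝ) * r ^ (2 * γ) := by positivity
    have e1 : (4:ℝ) * w₂ + 4 * w₃ = s + 1 := by rw [hw₂def, hw₃def]; ring
    have e2 : 2 * γ * w₃ = 2 := by rw [hw₃def]; field_simp
    have key : a ^ (s + 1) * r ^ (2 : ℝ) =
        (1:ℝ) ^ w₁ * (a ^ (4:ℝ)) ^ w₂ * (a ^ (4:ℝ) * r ^ (2 * γ)) ^ w₃ := by
      symm
      calc (1:ℝ) ^ w₁ * (a ^ (4:ℝ)) ^ w₂ * (a ^ (4:ℝ) * r ^ (2 * γ)) ^ w₃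
          = a ^ ((4:ℝ) * w₂) * (a ^ ((4:ℝ) * w₃) * r ^ (2 * γ * w₃)) := by
            rw [one_rpow, one_mul, Real.mul_rpow (by positivity) (by positivity),
              ← Real.rpow_mul ha, ← Real.rpow_mul ha, ← Real.rpow_mul hr]
        _ = a ^ ((4:ℝ) * w₂ + 4 * w₃) * r ^ (2 * γ * w₃) := by
            rw [Real.rpow_add ha0, ← mul_assoc]
        _ = a ^ (s + 1) * r ^ (2:ℝ) := by rw [e1, e2]
    rw [key]
    calc (1:ℝ) ^ w₁ * (a ^ (4:ℝ)) ^ w₂ * (a ^ (4:ℝ) * r ^ (2 * γ)) ^ w₃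
        ≤ w₁ * 1 + w₂ * a ^ (4:ℝ) + w₃ * (a ^ (4:ℝ) * r ^ (2 * γ)) :=
          Real.geom_mean_le_arith_mean3_weighted hw₁ hw₂ hw₃ zero_le_one hp₂ hp₃ hwsum
      _ ≤ 1 + r ^ (2 * (s + 1)) + a ^ (4:ℝ) + a ^ (4:ℝ) * r ^ (2 * γ) := by
          have h1 : w₁ ≤ 1 := by linarith
          have h2 : w₂ ≤ 1 := by linarith
          have h3 : w₃ ≤ 1 := by linarith
          have hr' : (0:ℝ) ≤ r ^ (2 * (s + 1)) := by positivity
          nlinarith [mul_le_of_le_one_left hp₂ h2, mul_le_of_le_one_left hp₃ h3]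

/-- Pointwise Fourier-multiplier inequality underlying the embedding
`‖v‖_{H^{(s+1)/2}_t H^1_x} ≤ C ‖v‖_{F^{s+1}}` (Case 2 of the embedding lemma). -/
theorem stmt_0 (s γ : ℝ) (hs₁ : 2 < s) (hs₂ : s < 5 / 2)
    (hγ₁ : (s - 1) ^ 2 / (s + 1) < γ) (hγ₂ : γ < s - 1) :
    ∃ C > (0 : ℝ), ∀ (τ : ℝ) (ξ : EuclideanSpace ℝ (Fin 2)),
      |τ| ^ (s + 1) * ‖ξ‖ ^ 2 ≤
        C * (1 + ‖ξ‖ ^ (2 * (s + 1)) + |τ| ^ 4 + |τ| ^ 4 * ‖ξ‖ ^ (2 * γ)) := by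
  refine ⟨1, one_pos, fun τ ξ => ?_⟩
  have h2 : ‖ξ‖ ^ 2 = ‖ξ‖ ^ (2 : ℝ) := by
    rw [← Real.rpow_natCast ‖ξ‖ 2]; norm_num
  have h4 : |τ| ^ 4 = |τ| ^ (4 : ℝ) := by
    rw [← Real.rpow_natCast |τ| 4]; norm_num
  rw [one_mul, h2, h4]
  exact stmt_0_aux s γ hs₁ hs₂ hγ₁ hγ₂ |τ| ‖ξ‖ (abs_nonneg τ) (norm_nonneg ξ)
end

section
/- Let s and γ be real numbers with 2 < s < 5/2 and 2(2s²−7s+7)/(2s−1) < γ < s−1. Then there exists a constant C > 0 such that for all τ ∈ ℝ and all ξ ∈ ℝ²: |τ|^{s−1/2}·‖ξ‖⁴ ≤ C·(1 + |τ|⁴ + ‖ξ‖^{2(s+1)} + |τ|⁴·‖ξ‖^{2γ}). -/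
set_option maxHeartbeats 1000000 in
private lemma key_ineq (s γ : ℝ) (hs₁ : 2 < s) (hs₂ : s < 5 / 2)
    (hγ₁ : 2 * (2 * s ^ 2 - 7 * s + 7) / (2 * s - 1) < γ) (hγ₂ : γ < s - 1)
    (a b : ℝ) (ha : 0 ≤ a) (hb : 0 ≤ b) :
    a ^ (s - 1 / 2) * b ^ 4 ≤ 1 + a ^ 4 + b ^ (2 * (s + 1)) + a ^ 4 * b ^ (2 * γ) := by
  have h2s : (0 : ℝ) < 2 * s - 1 := by linarith
  have hγ₁' : 2 * (2 * s ^ 2 - 7 * s + 7) < γ * (2 * s - 1) := by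
    rw [div_lt_iff₀ h2s] at hγ₁; linarith
  have hγ0 : 0 < γ := by nlinarith
  set α : ℝ := s - 1 / 2 with hαdef
  have hα0 : (0 : ℝ) < α := by simp only [hαdef]; linarith
  have hα2 : α < 2 := by simp only [hαdef]; linarith
  have hα32 : (3:ℝ)/2 < α := by simp only [hαdef]; linarith
  rcases eq_or_lt_of_le hb with hb0 | hbpos
  · -- b = 0
    rw [← hb0]
    have h1 : (0:ℝ) ^ 4 = 0 := by norm_num
    have h2 : (0:ℝ) ^ (2 * (s + 1)) = 0 := Real.zero_rpow (by nlinarith)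
    have h3 : (0:ℝ) ^ (2 * γ) = 0 := Real.zero_rpow (by nlinarith)
    rw [h1, h2, h3]
    have : 0 ≤ a ^ 4 := by positivity
    nlinarith
  rcases eq_or_lt_of_le ha with ha0 | hapos
  · -- a = 0
    rw [← ha0]
    have h1 : (0:ℝ) ^ α = 0 := Real.zero_rpow (by linarith)
    rw [h1]
    have h2 : 0 ≤ b ^ (2 * (s + 1)) := by positivity
    have h3 : 0 ≤ b ^ (2 * γ) := by positivity
    nlinarith
  -- main case a, b > 0
  set P : ℝ := 4 / α with hPdef
  set Q : ℝ := 4 / (4 - α) with hQdef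
  have h4α : (0:ℝ) < 4 - α := by linarith
  have hconj : P.HolderConjugate Q := by
    rw [Real.holderConjugate_iff]; constructor
    · rw [hPdef]; rw [lt_div_iff₀ hα0]; linarith
    · rw [hPdef, hQdef]
      field_simp
      ring
  set x : ℝ := a ^ α * b ^ (γ * α / 2) with hxdef
  set y : ℝ := b ^ (4 - γ * α / 2) with hydef
  have hx0 : 0 ≤ x := by positivity
  have hy0 : 0 ≤ y := by positivity
  have young := Real.young_inequality_of_nonneg hx0 hy0 hconj
  -- x * y = a ^ α * b ^ 4
  have hbb : b ^ (γ * α / 2) * b ^ (4 - γ * α / 2) = b ^ 4 := by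
    rw [show (b:ℝ) ^ 4 = b ^ ((4:ℕ):ℝ) from (Real.rpow_natCast b 4).symm,
      ← Real.rpow_add hbpos]
    norm_num
  have hxy : x * y = a ^ α * b ^ 4 := by
    rw [hxdef, hydef, mul_assoc, hbb]
  -- x ^ P = a ^ 4 * b ^ (2 * γ)
  have hxP : x ^ P = a ^ 4 * b ^ (2 * γ) := by
    rw [hxdef, Real.mul_rpow (by positivity) (by positivity),
      ← Real.rpow_mul ha, ← Real.rpow_mul hb]
    rw [show α * P = (4:ℝ) by rw [hPdef]; field_simp,
      show γ * α / 2 * P = 2 * γ by rw [hPdef]; field_simp; ring]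
    rw [show ((4:ℝ) : ℝ) = ((4:ℕ) : ℝ) by norm_num, Real.rpow_natCast]
  -- y ^ Q = b ^ e with 0 ≤ e ≤ 2 * (s + 1)
  have hyQ : y ^ Q = b ^ ((4 - γ * α / 2) * Q) := by
    rw [hydef, ← Real.rpow_mul hb]
  have he0 : 0 ≤ (4 - γ * α / 2) * Q := by
    have : γ * α / 2 < 4 := by nlinarith
    have hQ0 : 0 < Q := by rw [hQdef]; positivity
    nlinarith
  have he1 : (4 - γ * α / 2) * Q ≤ 2 * (s + 1) := by
    have hrw : (4 - γ * α / 2) * Q = (16 - 2 * γ * α) / (4 - α) := by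
      rw [hQdef]; field_simp [h4α.ne']; ring
    rw [hrw, div_le_iff₀ h4α]
    have h1 : 0 < 2 * s ^ 2 - 7 * s + 7 := by nlinarith [sq_nonneg (4 * s - 7)]
    simp only [hαdef]
    nlinarith [hγ₁', h1]
  have hbE : b ^ ((4 - γ * α / 2) * Q) ≤ 1 + b ^ (2 * (s + 1)) := by
    rcases le_or_gt b 1 with hb1 | hb1
    · have := Real.rpow_le_one (le_of_lt hbpos) hb1 he0
      have h2 : 0 ≤ b ^ (2 * (s + 1)) := by positivity
      linarith
    · have := Real.rpow_le_rpow_of_exponent_le (le_of_lt hb1) he1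
      linarith
  have hP1 : 1 ≤ P := le_of_lt hconj.lt
  have hQ1 : 1 ≤ Q := le_of_lt hconj.symm.lt
  have hdiv1 : x ^ P / P ≤ x ^ P := div_le_self (by positivity) hP1
  have hdiv2 : y ^ Q / Q ≤ y ^ Q := div_le_self (by positivity) hQ1
  have h4pos : 0 ≤ a ^ 4 := by positivity
  calc a ^ α * b ^ 4 = x * y := hxy.symm
    _ ≤ x ^ P / P + y ^ Q / Q := young
    _ ≤ x ^ P + y ^ Q := by linarith
    _ = a ^ 4 * b ^ (2 * γ) + b ^ ((4 - γ * α / 2) * Q) := by rw [hxP, hyQ]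
    _ ≤ 1 + a ^ 4 + b ^ (2 * (s + 1)) + a ^ 4 * b ^ (2 * γ) := by linarith

/-- Pointwise Fourier-multiplier inequality underlying the embedding
`‖v‖_{H^{s/2-1/4}_t H^2_x} ≤ C ‖v‖_{F^{s+1}}` (Case 4 of the embedding lemma). -/
theorem stmt_1 (s γ : ℝ) (hs₁ : 2 < s) (hs₂ : s < 5 / 2)
    (hγ₁ : 2 * (2 * s ^ 2 - 7 * s + 7) / (2 * s - 1) < γ) (hγ₂ : γ < s - 1) :
    ∃ C > (0 : ℝ), ∀ (τ : ℝ) (ξ : EuclideanSpace ℝ (Fin 2)),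
      |τ| ^ (s - 1 / 2) * ‖ξ‖ ^ 4 ≤
        C * (1 + |τ| ^ 4 + ‖ξ‖ ^ (2 * (s + 1)) + |τ| ^ 4 * ‖ξ‖ ^ (2 * γ)) := by
  refine ⟨1, one_pos, fun τ ξ => ?_⟩
  rw [one_mul]
  exact key_ineq s γ hs₁ hs₂ hγ₁ hγ₂ |τ| ‖ξ‖ (abs_nonneg τ) (norm_nonneg ξ)
end

section
/- Let s and γ be real numbers with 2 < s < 5/2 and (s−1)²/(s+1) < γ < s−1. Then there exists a constant C > 0 such that for every measurable function F : ℝ × ℝ² → ℂ one has ∫_{ℝ×ℝ²} (1+|τ|^{s+1})(1+‖ξ‖²)|F(τ,ξ)|² d(τ,ξ) ≤ C·∫_{ℝ×ℝ²} (1 + ‖ξ‖^{2(s+1)} + |τ|⁴ + |τ|⁴‖ξ‖^{2γ})|F(τ,ξ)|² d(τ,ξ) (as an inequality of integrals with values in [0,∞]). -/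
open MeasureTheory Real

open Real

lemma key_pointwise (s γ : ℝ) (hs₁ : 2 < s) (hs₂ : s < 5 / 2)
    (hγ₁ : (s - 1) ^ 2 / (s + 1) < γ) (hγ₂ : γ < s - 1)
    (a r : ℝ) (ha : 0 ≤ a) (hr : 0 ≤ r) :
    (1 + a ^ (s + 1)) * (1 + r ^ 2) ≤
      4 * (1 + r ^ (2 * (s + 1)) + a ^ 4 + a ^ 4 * r ^ (2 * γ)) := by
  have hs0 : (0:ℝ) < s + 1 := by linarith
  have hγ0 : 0 < γ := lt_of_le_of_lt (by positivity) hγ₁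
  set θ : ℝ := (s + 1) / 4 with hθdef
  have hθ0 : 0 < θ := by positivity
  have hθ1 : θ < 1 := by rw [hθdef]; linarith
  have hA : (0:ℝ) ≤ a ^ 4 := by positivity
  have hR1 : (0:ℝ) ≤ r ^ (2 * (s + 1)) := rpow_nonneg hr _
  have hRG : (0:ℝ) ≤ r ^ (2 * γ) := rpow_nonneg hr _
  have hAs : (0:ℝ) ≤ a ^ (s + 1) := rpow_nonneg ha _
  have hAG : (0:ℝ) ≤ a ^ 4 * r ^ (2 * γ) := mul_nonneg hA hRG
  -- term 1 : a^(s+1) ≤ 1 + a^4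
  have hT1 : a ^ (s + 1) ≤ 1 + a ^ 4 := by
    rcases le_or_gt a 1 with h | h
    · have := rpow_le_one ha h (le_of_lt hs0)
      linarith
    · have h1 : a ^ (s + 1) ≤ a ^ (((4:ℕ):ℝ)) :=
        rpow_le_rpow_of_exponent_le h.le (by push_cast; linarith)
      rw [rpow_natCast] at h1
      linarith
  -- term 2 : r^2 ≤ 1 + r^(2(s+1))
  have hT2 : r ^ 2 ≤ 1 + r ^ (2 * (s + 1)) := by
    rcases le_or_gt r 1 with h | h
    · have h2 : r ^ 2 ≤ 1 ^ 2 := pow_le_pow_left₀ hr h 2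
      simp only [one_pow] at h2
      linarith
    · have h1 : r ^ (((2:ℕ):ℝ)) ≤ r ^ (2 * (s + 1)) :=
        rpow_le_rpow_of_exponent_le h.le (by push_cast; linarith)
      rw [rpow_natCast] at h1
      linarith
  -- term 3
  have hT3 : a ^ (s + 1) * r ^ 2 ≤ 1 + a ^ 4 + a ^ 4 * r ^ (2 * γ) + r ^ (2 * (s + 1)) := by
    rcases le_or_gt r 1 with h | h
    · have hr2 : r ^ 2 ≤ 1 := by
        have := pow_le_pow_left₀ hr h 2; simpa using this
      have h1 : a ^ (s + 1) * r ^ 2 ≤ a ^ (s + 1) * 1 :=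
        mul_le_mul_of_nonneg_left hr2 hAs
      rw [mul_one] at h1
      linarith
    · set E : ℝ := 2 * γ * θ + 2 * (s + 1) * (1 - θ) with hEdef
      have hγs : (s - 1) ^ 2 < γ * (s + 1) := by
        rw [div_lt_iff₀ hs0] at hγ₁; linarith
      have hE2 : 2 ≤ E := by
        rw [hEdef, hθdef]
        nlinarith [hγs]
      have hrE : r ^ 2 ≤ r ^ E := by
        have h1 : r ^ (((2:ℕ):ℝ)) ≤ r ^ E :=
          rpow_le_rpow_of_exponent_le h.le (by push_cast; linarith)
        rwa [rpow_natCast] at h1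
      have hrpos : (0:ℝ) < r := lt_trans one_pos h
      have heq : a ^ (s + 1) * r ^ E =
          (a ^ 4 * r ^ (2 * γ)) ^ θ * (r ^ (2 * (s + 1))) ^ (1 - θ) := by
        rw [mul_rpow hA hRG, ← rpow_natCast a 4, ← rpow_mul ha, ← rpow_mul hr,
            ← rpow_mul hr, mul_assoc, ← rpow_add hrpos]
        congr 1
        · congr 1; rw [hθdef]; push_cast; ring
      have hyoung : (a ^ 4 * r ^ (2 * γ)) ^ θ * (r ^ (2 * (s + 1))) ^ (1 - θ) ≤
          θ * (a ^ 4 * r ^ (2 * γ)) + (1 - θ) * (r ^ (2 * (s + 1))) :=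
        Real.geom_mean_le_arith_mean2_weighted hθ0.le (by linarith) hAG hR1 (by ring)
      have h1 : a ^ (s + 1) * r ^ 2 ≤ a ^ (s + 1) * r ^ E :=
        mul_le_mul_of_nonneg_left hrE hAs
      have h2 : θ * (a ^ 4 * r ^ (2 * γ)) ≤ a ^ 4 * r ^ (2 * γ) :=
        mul_le_of_le_one_left hAG hθ1.le
      have h3 : (1 - θ) * (r ^ (2 * (s + 1))) ≤ r ^ (2 * (s + 1)) :=
        mul_le_of_le_one_left hR1 (by linarith)
      linarith [heq.le, heq.ge]
  have hexp : (1 + a ^ (s + 1)) * (1 + r ^ 2)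
      = 1 + r ^ 2 + a ^ (s + 1) + a ^ (s + 1) * r ^ 2 := by ring
  rw [hexp]
  linarith


/-- Fourier-side formulation of the space–time Sobolev embedding
`‖v‖²_{H^{(s+1)/2}_t H^1_x} ≤ C (‖v‖²_{L²_t H^{s+1}_x} + ‖v‖²_{H²_t H^γ_x})`. -/
theorem stmt_2 (s γ : ℝ) (hs₁ : 2 < s) (hs₂ : s < 5 / 2)
    (hγ₁ : (s - 1) ^ 2 / (s + 1) < γ) (hγ₂ : γ < s - 1) :
    ∃ C > (0 : ℝ), ∀ F : ℝ × EuclideanSpace ℝ (Fin 2) → ℂ, Measurable F →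
      (∫⁻ p, ENNReal.ofReal ((1 + |p.1| ^ (s + 1)) * (1 + ‖p.2‖ ^ 2) * ‖F p‖ ^ 2)) ≤
        ENNReal.ofReal C *
          ∫⁻ p, ENNReal.ofReal
            ((1 + ‖p.2‖ ^ (2 * (s + 1)) + |p.1| ^ 4 + |p.1| ^ 4 * ‖p.2‖ ^ (2 * γ)) *
              ‖F p‖ ^ 2) := by
  refine ⟨4, by norm_num, fun F _ => ?_⟩
  have key : ∀ p : ℝ × EuclideanSpace ℝ (Fin 2),
      ENNReal.ofReal ((1 + |p.1| ^ (s + 1)) * (1 + ‖p.2‖ ^ 2) * ‖F p‖ ^ 2) ≤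
        ENNReal.ofReal 4 * ENNReal.ofReal
          ((1 + ‖p.2‖ ^ (2 * (s + 1)) + |p.1| ^ 4 + |p.1| ^ 4 * ‖p.2‖ ^ (2 * γ)) *
            ‖F p‖ ^ 2) := by
    intro p
    rw [← ENNReal.ofReal_mul (by norm_num)]
    apply ENNReal.ofReal_le_ofReal
    rw [← mul_assoc]
    exact mul_le_mul_of_nonneg_right
      (key_pointwise s γ hs₁ hs₂ hγ₁ hγ₂ _ _ (abs_nonneg _) (norm_nonneg _))
      (sq_nonneg _)
  calc (∫⁻ p, ENNReal.ofReal ((1 + |p.1| ^ (s + 1)) * (1 + ‖p.2‖ ^ 2) * ‖F p‖ ^ 2))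
      ≤ ∫⁻ p, ENNReal.ofReal 4 * ENNReal.ofReal
          ((1 + ‖p.2‖ ^ (2 * (s + 1)) + |p.1| ^ 4 + |p.1| ^ 4 * ‖p.2‖ ^ (2 * γ)) *
            ‖F p‖ ^ 2) := lintegral_mono key
    _ = ENNReal.ofReal 4 * ∫⁻ p, ENNReal.ofReal
          ((1 + ‖p.2‖ ^ (2 * (s + 1)) + |p.1| ^ 4 + |p.1| ^ 4 * ‖p.2‖ ^ (2 * γ)) *
            ‖F p‖ ^ 2) := lintegral_const_mul' _ _ (by norm_num)
end

section
/- Let P be holomorphic on an open set U ⊆ ℂ with P'(y) ≠ 0 for all y ∈ U and mapping U bijectively onto an open set V; identify ℂ with ℝ². Define the matrix field A : V → M₂(ℝ) by A_{kj}(x) = (∂_j P^k)(P⁻¹(x)) (the real Jacobian of P evaluated at P⁻¹(x), where P = (P¹,P²)) and Q²(x) = |P'(P⁻¹(x))|². Let v : V → ℝ² be twice continuously differentiable with Tr(∇v A) := Σ_{l,i} ∂_l v^i · A_{li} = 0 on V. Then for each i ∈ {1,2} and every x ∈ V: Σ_l ∂_l ( (1/Q²) · Σ_j A_{lj} · ( Σ_k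 A_{kj} ∂_k v^i + Σ_k A_{ki} ∂_k v^j ) )(x) = Δ v^i(x), where Δ is the Euclidean Laplacian on ℝ². -/
open Filter Topology


/-- The two coordinate directions of `ℂ ≃ ℝ²`. -/
noncomputable def dirC : Fin 2 → ℂ := ![1, Complex.I]

/-- `j`-th partial derivative of a real-valued function on `ℂ ≃ ℝ²`. -/
noncomputable def pd (f : ℂ → ℝ) (j : Fin 2) (x : ℂ) : ℝ :=
  fderiv ℝ f x (dirC j)

/-- `k`-th real coordinate of a complex number (`k = 0`: real part, `k = 1`: imaginary part). -/
noncomputable def coordC (k : Fin 2) (w : ℂ) : ℝ := ![w.re, w.im] k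

/-- The matrix field `A k j x = (∂_j P^k)(P⁻¹ x)`. -/
noncomputable def jacA (P Pinv : ℂ → ℂ) (k j : Fin 2) (x : ℂ) : ℝ :=
  pd (fun z => coordC k (P z)) j (Pinv x)

/-- The conformal factor `Q²(x) = |P'(P⁻¹ x)|²`. -/
noncomputable def Qsq (P Pinv : ℂ → ℂ) (x : ℂ) : ℝ :=
  ‖deriv P (Pinv x)‖ ^ 2

/- Auxiliary definitions and lemmas. -/

/-- Entries of the Jacobian matrix of `P` evaluated at `Pinv z`, as functions on `V`. -/
noncomputable def cf (P Pinv : ℂ → ℂ) (i k : Fin 2) : ℂ → ℝ :=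
  fun z => coordC k (deriv P (Pinv z) * dirC i)

/-- First order partial derivatives of the components of `v`, as functions. -/
noncomputable def dv (v : ℂ → Fin 2 → ℝ) (k j : Fin 2) : ℂ → ℝ :=
  fun z => pd (fun y => v y j) k z

lemma coordC_zero (w : ℂ) : coordC 0 w = w.re := rfl
lemma coordC_one (w : ℂ) : coordC 1 w = w.im := rfl
lemma dirC_zero : dirC 0 = 1 := rfl
lemma dirC_one : dirC 1 = Complex.I := rfl

lemma pd_congr_nhds {f g : ℂ → ℝ} {x : ℂ} (h : f =ᶠ[nhds x] g) (j : Fin 2) :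
    pd f j x = pd g j x := by unfold pd; rw [h.fderiv_eq]

lemma hasFDerivAt_coordC {g : ℂ → ℂ} {x c : ℂ} (hg : HasDerivAt g c x) (k : Fin 2) :
    HasFDerivAt (fun z => coordC k (g z))
      ((if k = 0 then Complex.reCLM else Complex.imCLM).comp
        ((ContinuousLinearMap.smulRight (1 : ℂ →L[ℂ] ℂ) c).restrictScalars ℝ)) x := by
  fin_cases k
  · simpa [coordC, ContinuousLinearMap.smulRight_one_eq_toSpanSingleton, Function.comp_def] using Complex.reCLM.hasFDerivAt.comp x (hg.hasFDerivAt.restrictScalars ℝ)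
  · simpa [coordC, ContinuousLinearMap.smulRight_one_eq_toSpanSingleton, Function.comp_def] using Complex.imCLM.hasFDerivAt.comp x (hg.hasFDerivAt.restrictScalars ℝ)

lemma diff_coordC {g : ℂ → ℂ} {x c : ℂ} (hg : HasDerivAt g c x) (k : Fin 2) :
    DifferentiableAt ℝ (fun z => coordC k (g z)) x :=
  (hasFDerivAt_coordC hg k).differentiableAt

lemma pd_coordC {g : ℂ → ℂ} {x c : ℂ} (hg : HasDerivAt g c x) (k m : Fin 2) :
    pd (fun z => coordC k (g z)) m x = coordC k (c * dirC m) := by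
  unfold pd
  rw [(hasFDerivAt_coordC hg k).fderiv]
  fin_cases k <;> simp [coordC, mul_comm]

lemma diff_pd {w : ℂ → ℝ} {x : ℂ} (hw : ContDiffAt ℝ 2 w x) (k : Fin 2) :
    DifferentiableAt ℝ (fun z => pd w k z) x := by
  have hF : ContDiffAt ℝ 1 (fderiv ℝ w) x := hw.fderiv_right (by norm_num)
  exact (hF.differentiableAt one_ne_zero).clm_apply (differentiableAt_const _)

lemma pd_pd {w : ℂ → ℝ} {x : ℂ} (hw : ContDiffAt ℝ 2 w x) (m k : Fin 2) :
    pd (fun z => pd w k z) m x = fderiv ℝ (fderiv ℝ w) x (dirC m) (dirC k) := by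
  have hF : ContDiffAt ℝ 1 (fderiv ℝ w) x := hw.fderiv_right (by norm_num)
  unfold pd
  rw [fderiv_clm_apply (hF.differentiableAt one_ne_zero) (differentiableAt_const _)]
  simp

lemma pd_pd_symm {w : ℂ → ℝ} {x : ℂ} (hw : ContDiffAt ℝ 2 w x) (m k : Fin 2) :
    fderiv ℝ (fderiv ℝ w) x (dirC m) (dirC k) = fderiv ℝ (fderiv ℝ w) x (dirC k) (dirC m) :=
  (hw.isSymmSndFDerivAt (by norm_num)) _ _

lemma pd_mul2add {p1 q1 p2 q2 : ℂ → ℝ} {x : ℂ}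
    (hp1 : DifferentiableAt ℝ p1 x) (hq1 : DifferentiableAt ℝ q1 x)
    (hp2 : DifferentiableAt ℝ p2 x) (hq2 : DifferentiableAt ℝ q2 x) (m : Fin 2) :
    pd (fun z => p1 z * q1 z + p2 z * q2 z) m x
      = p1 x * pd q1 m x + q1 x * pd p1 m x + p2 x * pd q2 m x + q2 x * pd p2 m x := by
  unfold pd
  have h := ((hp1.hasFDerivAt.mul hq1.hasFDerivAt).add (hp2.hasFDerivAt.mul hq2.hasFDerivAt))
  rw [show (fun z => p1 z * q1 z + p2 z * q2 z) = p1 * q1 + p2 * q2 from rfl, h.fderiv]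
  simp; ring

lemma pd_mul4 {p1 q1 p2 q2 p3 q3 p4 q4 : ℂ → ℝ} {x : ℂ}
    (hp1 : DifferentiableAt ℝ p1 x) (hq1 : DifferentiableAt ℝ q1 x)
    (hp2 : DifferentiableAt ℝ p2 x) (hq2 : DifferentiableAt ℝ q2 x)
    (hp3 : DifferentiableAt ℝ p3 x) (hq3 : DifferentiableAt ℝ q3 x)
    (hp4 : DifferentiableAt ℝ p4 x) (hq4 : DifferentiableAt ℝ q4 x) (m : Fin 2) :
    pd (fun z => p1 z * q1 z + p2 z * q2 z + p3 z * q3 z + p4 z * q4 z) m x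
      = p1 x * pd q1 m x + q1 x * pd p1 m x + p2 x * pd q2 m x + q2 x * pd p2 m x
        + p3 x * pd q3 m x + q3 x * pd p3 m x + p4 x * pd q4 m x + q4 x * pd p4 m x := by
  unfold pd
  have h := (((hp1.hasFDerivAt.mul hq1.hasFDerivAt).add (hp2.hasFDerivAt.mul hq2.hasFDerivAt)).add
      (hp3.hasFDerivAt.mul hq3.hasFDerivAt)).add (hp4.hasFDerivAt.mul hq4.hasFDerivAt)
  rw [show (fun z => p1 z * q1 z + p2 z * q2 z + p3 z * q3 z + p4 z * q4 z)
    = p1 * q1 + p2 * q2 + p3 * q3 + p4 * q4 from rfl, h.fderiv]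
  simp; ring

lemma pd_one_div_mul {Q G : ℂ → ℝ} {x : ℂ}
    (hQ : DifferentiableAt ℝ Q x) (hG : DifferentiableAt ℝ G x) (h0 : Q x ≠ 0) (m : Fin 2) :
    pd (fun z => 1 / Q z * G z) m x
      = (pd G m x * Q x - G x * pd Q m x) / Q x ^ 2 := by
  have hQinv : HasFDerivAt (fun z => (Q z)⁻¹) ((-(Q x ^ 2)⁻¹) • fderiv ℝ Q x) x :=
    (hasDerivAt_inv h0).comp_hasFDerivAt x hQ.hasFDerivAt
  have h := hQinv.mul hG.hasFDerivAt
  simp only [one_div]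
  unfold pd
  rw [show (fun z => (Q z)⁻¹ * G z) = (fun z => (Q z)⁻¹) * G from rfl, h.fderiv]
  simp
  field_simp
  ring


/-- Divergence form of the transformed Laplacian: if `v` is `C²` on `V` and
`Tr(∇v A) = 0` on `V`, then for each component `i`,
`∑ l ∂_l ((1/Q²) ∑ j A_{lj} (∑ k A_{kj} ∂_k v^i + ∑ k A_{ki} ∂_k v^j)) = Δ v^i` on `V`. -/
theorem stmt_5 (U V : Set ℂ) (hU : IsOpen U) (hV : IsOpen V)
    (P Pinv : ℂ → ℂ)
    (hP : ∀ y ∈ U, DifferentiableAt ℂ P y)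
    (hP' : ∀ y ∈ U, deriv P y ≠ 0)
    (hbij : Set.BijOn P U V)
    (hinv : Set.InvOn Pinv P U V)
    (v : ℂ → Fin 2 → ℝ) (hv : ContDiffOn ℝ 2 v V)
    (hdiv : ∀ x ∈ V,
      ∑ l : Fin 2, ∑ i : Fin 2, pd (fun y => v y i) l x * jacA P Pinv l i x = 0) :
    ∀ i : Fin 2, ∀ x ∈ V,
      (∑ l : Fin 2, pd (fun y => (1 / Qsq P Pinv y) *
          ∑ j : Fin 2, jacA P Pinv l j y *
            ((∑ k : Fin 2, jacA P Pinv k j y * pd (fun z => v z i) k y) +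
             (∑ k : Fin 2, jacA P Pinv k i y * pd (fun z => v z j) k y))) l x) =
        ∑ d : Fin 2, pd (fun y => pd (fun z => v z i) d y) d x := by

  intro i x hx
  simp only [Fin.sum_univ_two]
  -- basic facts
  have hPinvU : ∀ z ∈ V, Pinv z ∈ U := by
    intro z hz
    obtain ⟨w, hw, rfl⟩ := hbij.surjOn hz
    rwa [hinv.1 hw]
  have hDO : DifferentiableOn ℂ P U := fun w hw => (hP w hw).differentiableWithinAt
  have hAn : AnalyticOnNhd ℂ P U := hDO.analyticOnNhd hU
  have hjac : ∀ z ∈ V, ∀ k j : Fin 2,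
      jacA P Pinv k j z = coordC k (deriv P (Pinv z) * dirC j) := by
    intro z hz k j
    exact pd_coordC ((hP _ (hPinvU z hz)).hasDerivAt) k j
  have hQeq : ∀ z ∈ V, Qsq P Pinv z
      = (deriv P (Pinv z)).re ^ 2 + (deriv P (Pinv z)).im ^ 2 := by
    intro z hz
    rw [Qsq, Complex.sq_norm, Complex.normSq_apply]; ring
  have hQne : ∀ z ∈ V, (deriv P (Pinv z)).re ^ 2 + (deriv P (Pinv z)).im ^ 2 ≠ 0 := by
    intro z hz
    have h := hP' _ (hPinvU z hz)
    intro hc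
    apply h
    have hre : (deriv P (Pinv z)).re = 0 ∧ (deriv P (Pinv z)).im = 0 := by
      constructor <;>
        nlinarith [sq_nonneg (deriv P (Pinv z)).re, sq_nonneg (deriv P (Pinv z)).im]
    exact Complex.ext hre.1 hre.2
  have hyU : Pinv x ∈ U := hPinvU x hx
  have hPy : P (Pinv x) = x := hinv.2 hx
  have hPy_strict : HasStrictDerivAt P (deriv P (Pinv x)) (Pinv x) := by
    have h := (hAn (Pinv x) hyU).hasStrictFDerivAt
    have h2 : HasStrictDerivAt P (fderiv ℂ P (Pinv x) 1) (Pinv x) := h.hasStrictDerivAt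
    simpa [fderiv_apply_one_eq_deriv] using h2
  have hev : ∀ᶠ w in nhds (Pinv x), Pinv (P w) = w :=
    Filter.eventually_of_mem (hU.mem_nhds hyU) (fun w hw => hinv.1 hw)
  have hPinv_strict : HasStrictDerivAt Pinv (deriv P (Pinv x))⁻¹ x := by
    have h := hPy_strict.to_local_left_inverse (hP' _ hyU) hev
    rwa [hPy] at h
  have hfd : DifferentiableAt ℂ (fun z => deriv P (Pinv z)) x :=
    ((hAn.deriv (Pinv x) hyU).differentiableAt).comp x hPinv_strict.hasDerivAt.differentiableAt
  obtain ⟨cc, hfc⟩ : ∃ cc, HasDerivAt (fun z => deriv P (Pinv z)) cc x :=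
    ⟨_, hfd.hasDerivAt⟩
  -- differentiability of building blocks
  have hvj : ∀ j : Fin 2, ContDiffAt ℝ 2 (fun yy => v yy j) x := by
    intro j
    have hvx : ContDiffAt ℝ 2 v x := (hv x hx).contDiffAt (hV.mem_nhds hx)
    exact ((contDiff_pi.mp contDiff_id j).contDiffAt).comp x hvx
  have hcf : ∀ i' k : Fin 2, DifferentiableAt ℝ (cf P Pinv i' k) x :=
    fun i' k => diff_coordC (hfc.mul_const (dirC i')) k
  have hcf_pd : ∀ i' k m : Fin 2,
      pd (cf P Pinv i' k) m x = coordC k (cc * dirC i' * dirC m) :=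
    fun i' k m => pd_coordC (hfc.mul_const (dirC i')) k m
  have hdv : ∀ k j : Fin 2, DifferentiableAt ℝ (dv v k j) x :=
    fun k j => diff_pd (hvj j) k
  have hdv_pd : ∀ m k j : Fin 2,
      pd (dv v k j) m x = fderiv ℝ (fderiv ℝ (fun yy => v yy j)) x (dirC m) (dirC k) :=
    fun m k j => pd_pd (hvj j) m k
  have hE0d : DifferentiableAt ℝ (fun z => cf P Pinv 0 0 z * dv v 0 i z + cf P Pinv 0 1 z * dv v 1 i z + cf P Pinv i 0 z * dv v 0 0 z + cf P Pinv i 1 z * dv v 1 0 z) x :=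
    ((((hcf 0 0).mul (hdv 0 i)).add ((hcf 0 1).mul (hdv 1 i))).add
      ((hcf i 0).mul (hdv 0 0))).add ((hcf i 1).mul (hdv 1 0))
  have hE1d : DifferentiableAt ℝ (fun z => cf P Pinv 1 0 z * dv v 0 i z + cf P Pinv 1 1 z * dv v 1 i z + cf P Pinv i 0 z * dv v 0 1 z + cf P Pinv i 1 z * dv v 1 1 z) x :=
    ((((hcf 1 0).mul (hdv 0 i)).add ((hcf 1 1).mul (hdv 1 i))).add
      ((hcf i 0).mul (hdv 0 1))).add ((hcf i 1).mul (hdv 1 1))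
  have hG0d : DifferentiableAt ℝ (fun z => cf P Pinv 0 0 z * (cf P Pinv 0 0 z * dv v 0 i z + cf P Pinv 0 1 z * dv v 1 i z + cf P Pinv i 0 z * dv v 0 0 z + cf P Pinv i 1 z * dv v 1 0 z) + cf P Pinv 1 0 z * (cf P Pinv 1 0 z * dv v 0 i z + cf P Pinv 1 1 z * dv v 1 i z + cf P Pinv i 0 z * dv v 0 1 z + cf P Pinv i 1 z * dv v 1 1 z)) x :=
    ((hcf 0 0).mul hE0d).add ((hcf 1 0).mul hE1d)
  have hG1d : DifferentiableAt ℝ (fun z => cf P Pinv 0 1 z * (cf P Pinv 0 0 z * dv v 0 i z + cf P Pinv 0 1 z * dv v 1 i z + cf P Pinv i 0 z * dv v 0 0 z + cf P Pinv i 1 z * dv v 1 0 z) + cf P Pinv 1 1 z * (cf P Pinv 1 0 z * dv v 0 i z + cf P Pinv 1 1 z * dv v 1 i z + cf P Pinv i 0 z * dv v 0 1 z + cf P Pinv i 1 z * dv v 1 1 z)) x :=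
    ((hcf 0 1).mul hE0d).add ((hcf 1 1).mul hE1d)
  have hQd : DifferentiableAt ℝ (fun z => cf P Pinv 0 0 z * cf P Pinv 0 0 z + cf P Pinv 0 1 z * cf P Pinv 0 1 z) x :=
    ((hcf 0 0).mul (hcf 0 0)).add ((hcf 0 1).mul (hcf 0 1))
  have hQx : (cf P Pinv 0 0 x * cf P Pinv 0 0 x + cf P Pinv 0 1 x * cf P Pinv 0 1 x) ≠ 0 := by
    have h := hQne x hx
    simp only [cf, coordC_zero, coordC_one, dirC_zero, mul_one]
    intro hcon
    exact h (by linear_combination hcon)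
  -- eventual equality of the divergence-form integrand with its nice form
  have hev0 : (fun y =>
          1 / Qsq P Pinv y *
            (jacA P Pinv 0 0 y *
                (jacA P Pinv 0 0 y * pd (fun z => v z i) 0 y + jacA P Pinv 1 0 y * pd (fun z => v z i) 1 y +
                  (jacA P Pinv 0 i y * pd (fun z => v z 0) 0 y + jacA P Pinv 1 i y * pd (fun z => v z 0) 1 y)) +
              jacA P Pinv 0 1 y *
                (jacA P Pinv 0 1 y * pd (fun z => v z i) 0 y + jacA P Pinv 1 1 y * pd (fun z => v z i) 1 y +
                  (jacA P Pinv 0 i y * pd (fun z => v z 1) 0 y + jacA P Pinv 1 i y * pd (fun z => v z 1) 1 y))))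
      =ᶠ[nhds x] (fun z => 1 / (cf P Pinv 0 0 z * cf P Pinv 0 0 z + cf P Pinv 0 1 z * cf P Pinv 0 1 z) * (cf P Pinv 0 0 z * (cf P Pinv 0 0 z * dv v 0 i z + cf P Pinv 0 1 z * dv v 1 i z + cf P Pinv i 0 z * dv v 0 0 z + cf P Pinv i 1 z * dv v 1 0 z) + cf P Pinv 1 0 z * (cf P Pinv 1 0 z * dv v 0 i z + cf P Pinv 1 1 z * dv v 1 i z + cf P Pinv i 0 z * dv v 0 1 z + cf P Pinv i 1 z * dv v 1 1 z))) := by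
    filter_upwards [hV.mem_nhds hx] with z hz
    simp only [dv, cf, hjac z hz, hQeq z hz, coordC_zero, coordC_one, dirC_zero, mul_one]
    ring
  have hev1 : (fun y =>
          1 / Qsq P Pinv y *
            (jacA P Pinv 1 0 y *
                (jacA P Pinv 0 0 y * pd (fun z => v z i) 0 y + jacA P Pinv 1 0 y * pd (fun z => v z i) 1 y +
                  (jacA P Pinv 0 i y * pd (fun z => v z 0) 0 y + jacA P Pinv 1 i y * pd (fun z => v z 0) 1 y)) +
              jacA P Pinv 1 1 y *
                (jacA P Pinv 0 1 y * pd (fun z => v z i) 0 y + jacA P Pinv 1 1 y * pd (fun z => v z i) 1 y +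
                  (jacA P Pinv 0 i y * pd (fun z => v z 1) 0 y + jacA P Pinv 1 i y * pd (fun z => v z 1) 1 y))))
      =ᶠ[nhds x] (fun z => 1 / (cf P Pinv 0 0 z * cf P Pinv 0 0 z + cf P Pinv 0 1 z * cf P Pinv 0 1 z) * (cf P Pinv 0 1 z * (cf P Pinv 0 0 z * dv v 0 i z + cf P Pinv 0 1 z * dv v 1 i z + cf P Pinv i 0 z * dv v 0 0 z + cf P Pinv i 1 z * dv v 1 0 z) + cf P Pinv 1 1 z * (cf P Pinv 1 0 z * dv v 0 i z + cf P Pinv 1 1 z * dv v 1 i z + cf P Pinv i 0 z * dv v 0 1 z + cf P Pinv i 1 z * dv v 1 1 z))) := by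
    filter_upwards [hV.mem_nhds hx] with z hz
    simp only [dv, cf, hjac z hz, hQeq z hz, coordC_zero, coordC_one, dirC_zero, mul_one]
    ring
  -- key derivative computations
  have key0 : pd (fun y =>
          1 / Qsq P Pinv y *
            (jacA P Pinv 0 0 y *
                (jacA P Pinv 0 0 y * pd (fun z => v z i) 0 y + jacA P Pinv 1 0 y * pd (fun z => v z i) 1 y +
                  (jacA P Pinv 0 i y * pd (fun z => v z 0) 0 y + jacA P Pinv 1 i y * pd (fun z => v z 0) 1 y)) +
              jacA P Pinv 0 1 y *
                (jacA P Pinv 0 1 y * pd (fun z => v z i) 0 y + jacA P Pinv 1 1 y * pd (fun z => v z i) 1 y +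
                  (jacA P Pinv 0 i y * pd (fun z => v z 1) 0 y + jacA P Pinv 1 i y * pd (fun z => v z 1) 1 y)))) 0 x
      = (pd (fun z => cf P Pinv 0 0 z * (cf P Pinv 0 0 z * dv v 0 i z + cf P Pinv 0 1 z * dv v 1 i z + cf P Pinv i 0 z * dv v 0 0 z + cf P Pinv i 1 z * dv v 1 0 z) + cf P Pinv 1 0 z * (cf P Pinv 1 0 z * dv v 0 i z + cf P Pinv 1 1 z * dv v 1 i z + cf P Pinv i 0 z * dv v 0 1 z + cf P Pinv i 1 z * dv v 1 1 z)) 0 x * (cf P Pinv 0 0 x * cf P Pinv 0 0 x + cf P Pinv 0 1 x * cf P Pinv 0 1 x)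
          - (cf P Pinv 0 0 x * (cf P Pinv 0 0 x * dv v 0 i x + cf P Pinv 0 1 x * dv v 1 i x + cf P Pinv i 0 x * dv v 0 0 x + cf P Pinv i 1 x * dv v 1 0 x) + cf P Pinv 1 0 x * (cf P Pinv 1 0 x * dv v 0 i x + cf P Pinv 1 1 x * dv v 1 i x + cf P Pinv i 0 x * dv v 0 1 x + cf P Pinv i 1 x * dv v 1 1 x)) * pd (fun z => cf P Pinv 0 0 z * cf P Pinv 0 0 z + cf P Pinv 0 1 z * cf P Pinv 0 1 z) 0 x) / (cf P Pinv 0 0 x * cf P Pinv 0 0 x + cf P Pinv 0 1 x * cf P Pinv 0 1 x) ^ 2 := by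
    rw [pd_congr_nhds hev0 0]
    exact pd_one_div_mul hQd hG0d hQx 0
  have key1 : pd (fun y =>
          1 / Qsq P Pinv y *
            (jacA P Pinv 1 0 y *
                (jacA P Pinv 0 0 y * pd (fun z => v z i) 0 y + jacA P Pinv 1 0 y * pd (fun z => v z i) 1 y +
                  (jacA P Pinv 0 i y * pd (fun z => v z 0) 0 y + jacA P Pinv 1 i y * pd (fun z => v z 0) 1 y)) +
              jacA P Pinv 1 1 y *
                (jacA P Pinv 0 1 y * pd (fun z => v z i) 0 y + jacA P Pinv 1 1 y * pd (fun z => v z i) 1 y +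
                  (jacA P Pinv 0 i y * pd (fun z => v z 1) 0 y + jacA P Pinv 1 i y * pd (fun z => v z 1) 1 y)))) 1 x
      = (pd (fun z => cf P Pinv 0 1 z * (cf P Pinv 0 0 z * dv v 0 i z + cf P Pinv 0 1 z * dv v 1 i z + cf P Pinv i 0 z * dv v 0 0 z + cf P Pinv i 1 z * dv v 1 0 z) + cf P Pinv 1 1 z * (cf P Pinv 1 0 z * dv v 0 i z + cf P Pinv 1 1 z * dv v 1 i z + cf P Pinv i 0 z * dv v 0 1 z + cf P Pinv i 1 z * dv v 1 1 z)) 1 x * (cf P Pinv 0 0 x * cf P Pinv 0 0 x + cf P Pinv 0 1 x * cf P Pinv 0 1 x)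
          - (cf P Pinv 0 1 x * (cf P Pinv 0 0 x * dv v 0 i x + cf P Pinv 0 1 x * dv v 1 i x + cf P Pinv i 0 x * dv v 0 0 x + cf P Pinv i 1 x * dv v 1 0 x) + cf P Pinv 1 1 x * (cf P Pinv 1 0 x * dv v 0 i x + cf P Pinv 1 1 x * dv v 1 i x + cf P Pinv i 0 x * dv v 0 1 x + cf P Pinv i 1 x * dv v 1 1 x)) * pd (fun z => cf P Pinv 0 0 z * cf P Pinv 0 0 z + cf P Pinv 0 1 z * cf P Pinv 0 1 z) 1 x) / (cf P Pinv 0 0 x * cf P Pinv 0 0 x + cf P Pinv 0 1 x * cf P Pinv 0 1 x) ^ 2 := by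
    rw [pd_congr_nhds hev1 1]
    exact pd_one_div_mul hQd hG1d hQx 1
  have hpdQ : ∀ m, pd (fun z => cf P Pinv 0 0 z * cf P Pinv 0 0 z + cf P Pinv 0 1 z * cf P Pinv 0 1 z) m x
      = cf P Pinv 0 0 x * pd (cf P Pinv 0 0) m x + cf P Pinv 0 0 x * pd (cf P Pinv 0 0) m x + cf P Pinv 0 1 x * pd (cf P Pinv 0 1) m x + cf P Pinv 0 1 x * pd (cf P Pinv 0 1) m x :=
    fun m => pd_mul2add (hcf 0 0) (hcf 0 0) (hcf 0 1) (hcf 0 1) m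
  have hpdG0 : ∀ m, pd (fun z => cf P Pinv 0 0 z * (cf P Pinv 0 0 z * dv v 0 i z + cf P Pinv 0 1 z * dv v 1 i z + cf P Pinv i 0 z * dv v 0 0 z + cf P Pinv i 1 z * dv v 1 0 z) + cf P Pinv 1 0 z * (cf P Pinv 1 0 z * dv v 0 i z + cf P Pinv 1 1 z * dv v 1 i z + cf P Pinv i 0 z * dv v 0 1 z + cf P Pinv i 1 z * dv v 1 1 z)) m x
      = cf P Pinv 0 0 x * pd (fun z => cf P Pinv 0 0 z * dv v 0 i z + cf P Pinv 0 1 z * dv v 1 i z + cf P Pinv i 0 z * dv v 0 0 z + cf P Pinv i 1 z * dv v 1 0 z) m x + (cf P Pinv 0 0 x * dv v 0 i x + cf P Pinv 0 1 x * dv v 1 i x + cf P Pinv i 0 x * dv v 0 0 x + cf P Pinv i 1 x * dv v 1 0 x) * pd (cf P Pinv 0 0) m x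
        + cf P Pinv 1 0 x * pd (fun z => cf P Pinv 1 0 z * dv v 0 i z + cf P Pinv 1 1 z * dv v 1 i z + cf P Pinv i 0 z * dv v 0 1 z + cf P Pinv i 1 z * dv v 1 1 z) m x + (cf P Pinv 1 0 x * dv v 0 i x + cf P Pinv 1 1 x * dv v 1 i x + cf P Pinv i 0 x * dv v 0 1 x + cf P Pinv i 1 x * dv v 1 1 x) * pd (cf P Pinv 1 0) m x :=
    fun m => pd_mul2add (hcf 0 0) hE0d (hcf 1 0) hE1d m
  have hpdG1 : ∀ m, pd (fun z => cf P Pinv 0 1 z * (cf P Pinv 0 0 z * dv v 0 i z + cf P Pinv 0 1 z * dv v 1 i z + cf P Pinv i 0 z * dv v 0 0 z + cf P Pinv i 1 z * dv v 1 0 z) + cf P Pinv 1 1 z * (cf P Pinv 1 0 z * dv v 0 i z + cf P Pinv 1 1 z * dv v 1 i z + cf P Pinv i 0 z * dv v 0 1 z + cf P Pinv i 1 z * dv v 1 1 z)) m x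
      = cf P Pinv 0 1 x * pd (fun z => cf P Pinv 0 0 z * dv v 0 i z + cf P Pinv 0 1 z * dv v 1 i z + cf P Pinv i 0 z * dv v 0 0 z + cf P Pinv i 1 z * dv v 1 0 z) m x + (cf P Pinv 0 0 x * dv v 0 i x + cf P Pinv 0 1 x * dv v 1 i x + cf P Pinv i 0 x * dv v 0 0 x + cf P Pinv i 1 x * dv v 1 0 x) * pd (cf P Pinv 0 1) m x
        + cf P Pinv 1 1 x * pd (fun z => cf P Pinv 1 0 z * dv v 0 i z + cf P Pinv 1 1 z * dv v 1 i z + cf P Pinv i 0 z * dv v 0 1 z + cf P Pinv i 1 z * dv v 1 1 z) m x + (cf P Pinv 1 0 x * dv v 0 i x + cf P Pinv 1 1 x * dv v 1 i x + cf P Pinv i 0 x * dv v 0 1 x + cf P Pinv i 1 x * dv v 1 1 x) * pd (cf P Pinv 1 1) m x :=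
    fun m => pd_mul2add (hcf 0 1) hE0d (hcf 1 1) hE1d m
  have hpdE0 : ∀ m, pd (fun z => cf P Pinv 0 0 z * dv v 0 i z + cf P Pinv 0 1 z * dv v 1 i z + cf P Pinv i 0 z * dv v 0 0 z + cf P Pinv i 1 z * dv v 1 0 z) m x = cf P Pinv 0 0 x * pd (dv v 0 i) m x + dv v 0 i x * pd (cf P Pinv 0 0) m x + cf P Pinv 0 1 x * pd (dv v 1 i) m x + dv v 1 i x * pd (cf P Pinv 0 1) m x + cf P Pinv i 0 x * pd (dv v 0 0) m x + dv v 0 0 x * pd (cf P Pinv i 0) m x + cf P Pinv i 1 x * pd (dv v 1 0) m x + dv v 1 0 x * pd (cf P Pinv i 1) m x :=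
    fun m => pd_mul4 (hcf 0 0) (hdv 0 i) (hcf 0 1) (hdv 1 i) (hcf i 0) (hdv 0 0)
      (hcf i 1) (hdv 1 0) m
  have hpdE1 : ∀ m, pd (fun z => cf P Pinv 1 0 z * dv v 0 i z + cf P Pinv 1 1 z * dv v 1 i z + cf P Pinv i 0 z * dv v 0 1 z + cf P Pinv i 1 z * dv v 1 1 z) m x = cf P Pinv 1 0 x * pd (dv v 0 i) m x + dv v 0 i x * pd (cf P Pinv 1 0) m x + cf P Pinv 1 1 x * pd (dv v 1 i) m x + dv v 1 i x * pd (cf P Pinv 1 1) m x + cf P Pinv i 0 x * pd (dv v 0 1) m x + dv v 0 1 x * pd (cf P Pinv i 0) m x + cf P Pinv i 1 x * pd (dv v 1 1) m x + dv v 1 1 x * pd (cf P Pinv i 1) m x :=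
    fun m => pd_mul4 (hcf 1 0) (hdv 0 i) (hcf 1 1) (hdv 1 i) (hcf i 0) (hdv 0 1)
      (hcf i 1) (hdv 1 1) m
  -- the transformed divergence-free condition and its derivatives
  have htau_ev : (fun z => dv v 0 0 z * cf P Pinv 0 0 z + dv v 0 1 z * cf P Pinv 1 0 z + dv v 1 0 z * cf P Pinv 0 1 z + dv v 1 1 z * cf P Pinv 1 1 z) =ᶠ[nhds x] (fun _ => (0:ℝ)) := by
    filter_upwards [hV.mem_nhds hx] with z hz
    have h := hdiv z hz
    simp only [Fin.sum_univ_two, hjac z hz] at h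
    simp only [dv, cf]
    linear_combination h
  have htau_pd : ∀ m, pd (fun z => dv v 0 0 z * cf P Pinv 0 0 z + dv v 0 1 z * cf P Pinv 1 0 z + dv v 1 0 z * cf P Pinv 0 1 z + dv v 1 1 z * cf P Pinv 1 1 z) m x = 0 := by
    intro m
    rw [pd_congr_nhds htau_ev m]
    simp [pd]
  have hT1 : dv v 0 0 x * pd (cf P Pinv 0 0) 0 x + cf P Pinv 0 0 x * pd (dv v 0 0) 0 x + dv v 0 1 x * pd (cf P Pinv 1 0) 0 x + cf P Pinv 1 0 x * pd (dv v 0 1) 0 x + dv v 1 0 x * pd (cf P Pinv 0 1) 0 x + cf P Pinv 0 1 x * pd (dv v 1 0) 0 x + dv v 1 1 x * pd (cf P Pinv 1 1) 0 x + cf P Pinv 1 1 x * pd (dv v 1 1) 0 x = 0 :=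
    (pd_mul4 (hdv 0 0) (hcf 0 0) (hdv 0 1) (hcf 1 0) (hdv 1 0) (hcf 0 1)
      (hdv 1 1) (hcf 1 1) 0).symm.trans (htau_pd 0)
  have hT2 : dv v 0 0 x * pd (cf P Pinv 0 0) 1 x + cf P Pinv 0 0 x * pd (dv v 0 0) 1 x + dv v 0 1 x * pd (cf P Pinv 1 0) 1 x + cf P Pinv 1 0 x * pd (dv v 0 1) 1 x + dv v 1 0 x * pd (cf P Pinv 0 1) 1 x + cf P Pinv 0 1 x * pd (dv v 1 0) 1 x + dv v 1 1 x * pd (cf P Pinv 1 1) 1 x + cf P Pinv 1 1 x * pd (dv v 1 1) 1 x = 0 :=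
    (pd_mul4 (hdv 0 0) (hcf 0 0) (hdv 0 1) (hcf 1 0) (hdv 1 0) (hcf 0 1)
      (hdv 1 1) (hcf 1 1) 1).symm.trans (htau_pd 1)
  -- rewrite the right-hand side
  have hRHS0 : pd (fun y => pd (fun z => v z i) 0 y) 0 x
      = fderiv ℝ (fderiv ℝ (fun yy => v yy i)) x (dirC 0) (dirC 0) := pd_pd (hvj i) 0 0
  have hRHS1 : pd (fun y => pd (fun z => v z i) 1 y) 1 x
      = fderiv ℝ (fderiv ℝ (fun yy => v yy i)) x (dirC 1) (dirC 1) := pd_pd (hvj i) 1 1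
  have hswap : ∀ j : Fin 2,
      fderiv ℝ (fderiv ℝ (fun yy => v yy j)) x (dirC 1) (dirC 0)
        = fderiv ℝ (fderiv ℝ (fun yy => v yy j)) x (dirC 0) (dirC 1) :=
    fun j => pd_pd_symm (hvj j) 1 0
  rw [key0, key1, hRHS0, hRHS1, ← add_div, div_eq_iff (pow_ne_zero 2 hQx)]
  simp only [hpdG0 0, hpdG1 1, hpdE0, hpdE1, hpdQ, hcf_pd, hdv_pd, hswap] at hT1 hT2 ⊢
  rcases show i = 0 ∨ i = 1 by omega with rfl | rfl
  · simp only [cf, dv, coordC_zero, coordC_one, dirC_zero, dirC_one, mul_one,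
        Complex.mul_re, Complex.mul_im, Complex.I_re, Complex.I_im, mul_zero, mul_one,
        zero_sub, sub_zero, zero_mul, one_mul, add_zero, zero_add, neg_neg] at hT1 hT2 ⊢
    linear_combination (((deriv P (Pinv x)).re ^ 2 + (deriv P (Pinv x)).im ^ 2)) *
        ((deriv P (Pinv x)).re * hT1 + (deriv P (Pinv x)).im * hT2)
  · simp only [cf, dv, coordC_zero, coordC_one, dirC_zero, dirC_one, mul_one,
        Complex.mul_re, Complex.mul_im, Complex.I_re, Complex.I_im, mul_zero, mul_one,
        zero_sub, sub_zero, zero_mul, one_mul, add_zero, zero_add, neg_neg] at hT1 hT2 ⊢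
    linear_combination (((deriv P (Pinv x)).re ^ 2 + (deriv P (Pinv x)).im ^ 2)) *
        ((deriv P (Pinv x)).re * hT2 - (deriv P (Pinv x)).im * hT1)
end

section
/- Let A : ℝ² → M₂(ℝ) be differentiable at a point x₀ and let Q > 0 satisfy A(x₀)·A(x₀)ᵀ = Q²·I. Let ψ : ℝ² → ℝ be twice continuously differentiable with ∇ψ(x₀) = 0, ∂₁²ψ(x₀) = 0 and ∂₁∂₂ψ(x₀) = 0. Define w near x₀ by w¹ = −(A_{12}∂₁ψ + A_{22}∂₂ψ), w² = A_{11}∂₁ψ + A_{21}∂₂ψ. Set n₀ = (0,1), B = A(x₀), and let M ∈ M₂(ℝ) be given by M_{ij} = Σ_l ∂_l w^i(x₀)·B_{lj}. Then ⟨J(B⁻¹n₀), (M + Mᵀ)(B⁻¹n₀)⟩ = ∂₂²ψ(x₀), where J = [[0,−1],[1,0]]. -/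
open Matrix

/-- `j`-th partial derivative of a real-valued function on `ℝ²`. -/
noncomputable def pdE (f : EuclideanSpace ℝ (Fin 2) → ℝ) (j : Fin 2)
    (x : EuclideanSpace ℝ (Fin 2)) : ℝ :=
  fderiv ℝ f x (EuclideanSpace.single j 1)

set_option maxHeartbeats 1000000 in
/-- Pointwise computation in the boundary-adjustment lemma: for
`w = ∇_A^⊥ ψ` and a stream function `ψ` vanishing to the stated order at `x₀` (with normal
`n₀ = (0,1)`), the tangential–normal component of the deformation tensor of `w` equals
`∂₂²ψ(x₀)`. -/
theorem stmt_7 (A : EuclideanSpace ℝ (Fin 2) → Matrix (Fin 2) (Fin 2) ℝ)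
    (x₀ : EuclideanSpace ℝ (Fin 2))
    (hA : ∀ i j, DifferentiableAt ℝ (fun x => A x i j) x₀)
    (Q : ℝ) (hQ : 0 < Q)
    (hAQ : A x₀ * (A x₀)ᵀ = (Q ^ 2) • (1 : Matrix (Fin 2) (Fin 2) ℝ))
    (ψ : EuclideanSpace ℝ (Fin 2) → ℝ) (hψ : ContDiff ℝ 2 ψ)
    (hgrad : fderiv ℝ ψ x₀ = 0)
    (h11 : pdE (fun x => pdE ψ 0 x) 0 x₀ = 0)
    (h12 : pdE (fun x => pdE ψ 1 x) 0 x₀ = 0)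
    (w : EuclideanSpace ℝ (Fin 2) → Fin 2 → ℝ)
    (hw0 : ∀ x, w x 0 = -(A x 0 1 * pdE ψ 0 x + A x 1 1 * pdE ψ 1 x))
    (hw1 : ∀ x, w x 1 = A x 0 0 * pdE ψ 0 x + A x 1 0 * pdE ψ 1 x)
    (M : Matrix (Fin 2) (Fin 2) ℝ)
    (hM : ∀ i j, M i j = ∑ l : Fin 2, pdE (fun x => w x i) l x₀ * A x₀ l j)
    (J : Matrix (Fin 2) (Fin 2) ℝ) (hJ : J = !![0, -1; 1, 0]) :
    (J.mulVec ((A x₀)⁻¹.mulVec ![0, 1])) ⬝ᵥ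
        ((M + Mᵀ).mulVec ((A x₀)⁻¹.mulVec ![0, 1])) =
      pdE (fun x => pdE ψ 1 x) 1 x₀ := by
  have hQ2 : (Q : ℝ) ^ 2 ≠ 0 := pow_ne_zero _ hQ.ne'
  set E : Fin 2 → EuclideanSpace ℝ (Fin 2) := fun j => EuclideanSpace.single j 1 with hE
  -- second derivatives
  have hd1 : ContDiff ℝ 1 (fderiv ℝ ψ) := hψ.fderiv_right (by norm_num)
  have hc : DifferentiableAt ℝ (fderiv ℝ ψ) x₀ := (hd1.differentiable one_ne_zero) x₀
  have hgdiff : ∀ k : Fin 2, DifferentiableAt ℝ (fun x => pdE ψ k x) x₀ := fun k =>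
    hc.clm_apply (differentiableAt_const _)
  have hgder : ∀ l k : Fin 2,
      pdE (fun x => pdE ψ k x) l x₀ = fderiv ℝ (fderiv ℝ ψ) x₀ (E l) (E k) := by
    intro l k
    have := fderiv_clm_apply (x := x₀) hc (differentiableAt_const (E k))
    simp only [pdE, this]
    simp [hE] at this ⊢
    simp [this]
  have hsymm : pdE (fun x => pdE ψ 0 x) 1 x₀ = 0 := by
    rw [hgder, (hψ.contDiffAt.isSymmSndFDerivAt (by norm_num)) (E 1) (E 0), ← hgder, h12]
  have hg0 : ∀ k : Fin 2, pdE ψ k x₀ = 0 := by intro k; simp [pdE, hgrad]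
  -- derivative of products
  have hmul : ∀ i j k, fderiv ℝ (fun x => A x i j * pdE ψ k x) x₀ =
      A x₀ i j • fderiv ℝ (fun x => pdE ψ k x) x₀ := by
    intro i j k
    rw [fderiv_fun_mul (hA i j) (hgdiff k), hg0 k]
    simp
  set d : ℝ := pdE (fun x => pdE ψ 1 x) 1 x₀ with hd
  set a : ℝ := A x₀ 1 0 with ha
  set b : ℝ := A x₀ 1 1 with hb
  -- derivatives of w
  have hw0' : ∀ l : Fin 2, pdE (fun x => w x 0) l x₀ =
      -(A x₀ 0 1 * pdE (fun x => pdE ψ 0 x) l x₀ + b * pdE (fun x => pdE ψ 1 x) l x₀) := by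
    intro l
    have hfe : (fun x => w x 0) = fun x => -(A x 0 1 * pdE ψ 0 x + A x 1 1 * pdE ψ 1 x) :=
      funext hw0
    show (fderiv ℝ (fun x => w x 0) x₀) (E l) = _
    rw [hfe, fderiv_fun_neg, fderiv_fun_add ((hA 0 1).fun_mul (hgdiff 0)) ((hA 1 1).fun_mul (hgdiff 1)),
      hmul, hmul]
    simp [pdE, hE, hb]
  have hw1' : ∀ l : Fin 2, pdE (fun x => w x 1) l x₀ =
      A x₀ 0 0 * pdE (fun x => pdE ψ 0 x) l x₀ + a * pdE (fun x => pdE ψ 1 x) l x₀ := by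
    intro l
    have hfe : (fun x => w x 1) = fun x => A x 0 0 * pdE ψ 0 x + A x 1 0 * pdE ψ 1 x :=
      funext hw1
    show (fderiv ℝ (fun x => w x 1) x₀) (E l) = _
    rw [hfe, fderiv_fun_add ((hA 0 0).fun_mul (hgdiff 0)) ((hA 1 0).fun_mul (hgdiff 1)), hmul, hmul]
    simp [pdE, hE, ha]
  have hDw00 : pdE (fun x => w x 0) 0 x₀ = 0 := by rw [hw0' 0, h11, h12]; ring
  have hDw01 : pdE (fun x => w x 0) 1 x₀ = -(b * d) := by rw [hw0' 1, hsymm, ← hd]; ring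
  have hDw10 : pdE (fun x => w x 1) 0 x₀ = 0 := by rw [hw1' 0, h11, h12]; ring
  have hDw11 : pdE (fun x => w x 1) 1 x₀ = a * d := by rw [hw1' 1, hsymm, ← hd]; ring
  -- inverse of A x₀
  have hInv : (A x₀)⁻¹ = (Q ^ 2)⁻¹ • (A x₀)ᵀ := by
    apply Matrix.inv_eq_right_inv
    rw [Matrix.mul_smul, hAQ, smul_smul, inv_mul_cancel₀ hQ2, one_smul]
  have hrow : a ^ 2 + b ^ 2 = Q ^ 2 := by
    have := congrFun (congrFun hAQ 1) 1
    simp [Matrix.mul_apply, Fin.sum_univ_two, Matrix.one_apply, ha, hb] at this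
    nlinarith [this]
  -- M entries
  have hM00 : M 0 0 = -(b * d) * a := by rw [hM]; simp [Fin.sum_univ_two, hDw00, hDw01, ha]
  have hM01 : M 0 1 = -(b * d) * b := by rw [hM]; simp [Fin.sum_univ_two, hDw00, hDw01, hb]
  have hM10 : M 1 0 = a * d * a := by rw [hM]; simp [Fin.sum_univ_two, hDw10, hDw11, ha]
  have hM11 : M 1 1 = a * d * b := by rw [hM]; simp [Fin.sum_univ_two, hDw10, hDw11, hb]
  rw [hInv, hJ]
  simp only [Matrix.mulVec, dotProduct, Fin.sum_univ_two, Matrix.smul_apply,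
    Matrix.transpose_apply, Matrix.add_apply, Matrix.cons_val_zero, Matrix.cons_val_one,
    Matrix.head_cons, Matrix.head_fin_const, Matrix.cons_val', Matrix.empty_val',
    Matrix.cons_val_fin_one, Matrix.of_apply, smul_eq_mul, hM00, hM01, hM10, hM11, ← ha, ← hb]
  field_simp
  linear_combination d * (a ^ 2 + b ^ 2 + Q ^ 2) * hrow
end
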